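/- Let q ∈ L²(I,ℝᴺ) satisfy |q(t)| = 1 for almost every t ∈ I. Then the closure of the Γ-orbit of q equals the Γ̃-orbit of q: [q] = qΓ̃ = {q*γ : γ ∈ Γ̃}. -/

import Mathlib

open MeasureTheory Set Filter

noncomputable section

/-- Lebesgue measure restricted to the unit interval `I = [0,1]`. -/
def μ01 : Measure ℝ := volume.restrict (Set.Icc (0:ℝ) 1)

/-- An element of the reparametrization semigroup `Γ̃`: an absolutely continuous
`γ : I → I` with `γ 0 = 0`, `γ 1 = 1`, and `γ' ≥ 0` a.e.; absolute continuity is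
encoded by the data of an integrable a.e. derivative `deriv'` with
`γ t = ∫₀ᵗ deriv'`. -/
structure GammaTilde where
  toFun : ℝ → ℝ
  deriv' : ℝ → ℝ
  integrableOn : IntegrableOn deriv' (Set.Icc (0:ℝ) 1) volume
  nonneg : ∀ᵐ t ∂μ01, 0 ≤ deriv' t
  map_zero : toFun 0 = 0
  map_one : toFun 1 = 1
  eq_integral : ∀ t ∈ Set.Icc (0:ℝ) 1, toFun t = ∫ u in (0:ℝ)..t, deriv' u

/-- `γ ∈ Γ` iff moreover `γ' > 0` almost everywhere. -/
def GammaTilde.IsInGamma (γ : GammaTilde) : Prop := ∀ᵐ t ∂μ01, 0 < γ.deriv' t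

variable {E : Type*} [NormedAddCommGroup E] [InnerProductSpace ℝ E]

/-- The right action `(q*γ)(t) = √(γ'(t)) • q(γ(t))`. -/
def act (q : ℝ → E) (γ : GammaTilde) : ℝ → E :=
  fun t => Real.sqrt (γ.deriv' t) • q (γ.toFun t)

/-- The `L²(I)` inner product `⟨f,g⟩ = ∫₀¹ f·g`. -/
def L2inner (f g : ℝ → E) : ℝ := ∫ t in Set.Icc (0:ℝ) 1, (inner ℝ (f t) (g t) : ℝ)

/-- The `L²(I)` distance. -/
def L2dist (f g : ℝ → E) : ℝ := Real.sqrt (∫ t in Set.Icc (0:ℝ) 1, ‖f t - g t‖^2)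

/-- The orbit `qΓ` of `q` under `Γ` (up to a.e. equality, as befits `L²`). -/
def orbit (q : ℝ → E) : Set (ℝ → E) :=
  {p | ∃ γ : GammaTilde, γ.IsInGamma ∧ p =ᵐ[μ01] act q γ}

/-- The orbit `qΓ̃` of `q` under the semigroup `Γ̃` (up to a.e. equality). -/
def orbitTilde (q : ℝ → E) : Set (ℝ → E) :=
  {p | ∃ γ : GammaTilde, p =ᵐ[μ01] act q γ}

/-- The closure `[q]` of `qΓ` in `L²(I)`. -/
def orbitClosure (q : ℝ → E) : Set (ℝ → E) :=
  {p | MemLp p 2 μ01 ∧ ∀ ε > 0, ∃ r ∈ orbit q, L2dist r p < ε}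


/-!
Replace `q` by an everywhere unit-norm representative `Q`, and `γ'` by a nonnegative version. As
`⟪a, b⟫ = 1 - ‖a - b‖² / 2` for unit vectors, `‖q * γ‖ = 1` and
`⟪q * γ, q * β⟫ = ∫ √γ' √β' - ½ ∫ √γ' √β' ‖Q ∘ γ - Q ∘ β‖²`, where the last integral tends to `0`
as `γ → β` uniformly.

`qΓ̃ ⊆ [q]`: the maps `γ_c = (γ + c·id) / (1 + c) ∈ Γ` tend to `γ` uniformly and
`∫ √γ_c' √γ' → 1` as `c → 0`, so `q * γ_c → q * γ`.

`[q] ⊆ qΓ̃`: a limit `p` of orbit points `q * γₙ` has `‖p‖ = 1`, so `Φ' = ‖p‖²` defines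
`Φ ∈ Γ̃`. Since `∫ |γₙ' - Φ'| = ∫ |‖q * γₙ‖² - ‖p‖²| ≤ 2 ‖q * γₙ - p‖`, `γₙ → Φ` uniformly, and
`⟪p, q * Φ⟫ = lim ⟪q * γₙ, q * Φ⟫ ≥ lim inf ∫ √γₙ' ‖p‖ ≥ lim ⟪q * γₙ, p⟫ = 1`, so `p = q * Φ`.
-/

section L2

variable {α : Type*} [MeasurableSpace α] {μ : Measure α}
  {F : Type*} [NormedAddCommGroup F]

lemma MeasureTheory.MemLp.inner_toLp {f g : α → E} (hf : MemLp f 2 μ) (hg : MemLp g 2 μ) :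
    inner ℝ (hf.toLp f) (hg.toLp g) = ∫ t, inner ℝ (f t) (g t) ∂μ := by
  rw [L2.inner_def]
  refine integral_congr_ae ?_
  filter_upwards [hf.coeFn_toLp, hg.coeFn_toLp] with t hft hgt
  rw [hft, hgt]

lemma MeasureTheory.MemLp.norm_toLp_eq_sqrt {f : α → F} (hf : MemLp f 2 μ) :
    ‖hf.toLp f‖ = √(∫ t, ‖f t‖ ^ 2 ∂μ) := by
  rw [Lp.norm_toLp, ← eLpNorm_norm, ← Lp.norm_toLp _ hf.norm, norm_eq_sqrt_real_inner,
    hf.norm.inner_toLp hf.norm]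
  simp_rw [real_inner_self_eq_norm_sq, norm_norm]

lemma integral_mul_le_sqrt_mul_sqrt {f g : α → ℝ} (hf : MemLp f 2 μ) (hg : MemLp g 2 μ) :
    ∫ t, f t * g t ∂μ ≤ √(∫ t, f t ^ 2 ∂μ) * √(∫ t, g t ^ 2 ∂μ) := by
  have h := real_inner_le_norm (hf.toLp f) (hg.toLp g)
  simpa only [MemLp.inner_toLp, MemLp.norm_toLp_eq_sqrt, Real.norm_eq_abs, sq_abs,
    RCLike.inner_apply, conj_trivial, mul_comm (g _)] using h

lemma MeasureTheory.Lp.norm_eq_sqrt_integral (f : Lp F 2 μ) : ‖f‖ = √(∫ t, ‖f t‖ ^ 2 ∂μ) := by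
  simpa only [Lp.toLp_coeFn] using (Lp.memLp f).norm_toLp_eq_sqrt

lemma integral_abs_norm_sq_sub_norm_sq_le (f g : Lp F 2 μ) :
    ∫ t, |‖f t‖ ^ 2 - ‖g t‖ ^ 2| ∂μ ≤ ‖f - g‖ * (‖f‖ + ‖g‖) := by
  have hfg : MemLp (fun t => ‖(f - g) t‖) 2 μ := (Lp.memLp _).norm
  have hpt : ∀ᵐ t ∂μ, |‖f t‖ ^ 2 - ‖g t‖ ^ 2| ≤ ‖(f - g) t‖ * ‖f t‖ + ‖(f - g) t‖ * ‖g t‖ := by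
    filter_upwards [Lp.coeFn_sub f g] with t ht
    rw [ht, Pi.sub_apply, sq_sub_sq, abs_mul, ← mul_add,
      abs_of_nonneg (add_nonneg (norm_nonneg _) (norm_nonneg _)), mul_comm]
    gcongr
    exact abs_norm_sub_norm_le _ _
  have hi_f : Integrable (fun t => ‖(f - g) t‖ * ‖f t‖) μ := hfg.integrable_mul (Lp.memLp f).norm
  have hi_g : Integrable (fun t => ‖(f - g) t‖ * ‖g t‖) μ := hfg.integrable_mul (Lp.memLp g).norm
  calc ∫ t, |‖f t‖ ^ 2 - ‖g t‖ ^ 2| ∂μ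
      ≤ ∫ t, ‖(f - g) t‖ * ‖f t‖ ∂μ + ∫ t, ‖(f - g) t‖ * ‖g t‖ ∂μ := by
        rw [← integral_add hi_f hi_g]
        exact integral_mono_of_nonneg (ae_of_all _ fun t => abs_nonneg _) (hi_f.add hi_g) hpt
    _ ≤ ‖f - g‖ * ‖f‖ + ‖f - g‖ * ‖g‖ := by
        rw [Lp.norm_eq_sqrt_integral (f - g), Lp.norm_eq_sqrt_integral f,
          Lp.norm_eq_sqrt_integral g]
        exact add_le_add (integral_mul_le_sqrt_mul_sqrt hfg (Lp.memLp f).norm)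
          (integral_mul_le_sqrt_mul_sqrt hfg (Lp.memLp g).norm)
    _ = ‖f - g‖ * (‖f‖ + ‖g‖) := by ring

lemma exists_stronglyMeasurable_norm_eq_one [NeZero μ] {q : α → F}
    (hq : AEStronglyMeasurable q μ) (hunit : ∀ᵐ t ∂μ, ‖q t‖ = 1) :
    ∃ Q : α → F, StronglyMeasurable Q ∧ (∀ t, ‖Q t‖ = 1) ∧ q =ᵐ[μ] Q := by
  classical
  obtain ⟨t₀, ht₀, -⟩ := (hunit.and hq.ae_eq_mk).exists
  let S : Set α := {t | ‖hq.mk q t‖ = 1}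
  have hS : MeasurableSet S := hq.stronglyMeasurable_mk.norm.measurable (measurableSet_singleton 1)
  refine ⟨S.piecewise (hq.mk q) (fun _ => q t₀),
    hq.stronglyMeasurable_mk.piecewise hS stronglyMeasurable_const, fun t => ?_, ?_⟩
  · by_cases ht : t ∈ S
    · rwa [S.piecewise_eq_of_mem _ _ ht]
    · rwa [S.piecewise_eq_of_notMem _ _ ht]
  · filter_upwards [hunit, hq.ae_eq_mk] with t ht hmk
    have htS : t ∈ S := show ‖hq.mk q t‖ = 1 by rw [← hmk, ht]
    rw [S.piecewise_eq_of_mem _ _ htS, hmk]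

lemma norm_sub_sq_le_of_norm_eq_one {a b : F}
    (ha : ‖a‖ = 1) (hb : ‖b‖ = 1) (a' b' : F) :
    ‖a - b‖ ^ 2 ≤ 2 * (‖a' - b'‖ + ‖a - a'‖ + ‖b - b'‖) := by
  have h2 : ‖a - b‖ ≤ 2 := (norm_sub_le a b).trans (by rw [ha, hb]; norm_num)
  have htri : ‖a - b‖ ≤ ‖a - a'‖ + ‖a' - b'‖ + ‖b - b'‖ := by
    calc ‖a - b‖ ≤ ‖a - a'‖ + ‖a' - b‖ := norm_sub_le_norm_sub_add_norm_sub _ _ _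
      _ ≤ ‖a - a'‖ + (‖a' - b'‖ + ‖b' - b‖) := by
          gcongr
          exact norm_sub_le_norm_sub_add_norm_sub _ _ _
      _ = ‖a - a'‖ + ‖a' - b'‖ + ‖b - b'‖ := by rw [norm_sub_rev b' b, add_assoc]
  nlinarith [norm_nonneg (a - b)]

end L2

lemma Monotone.exists_preimage_Iic_eq_Iic {f : ℝ → ℝ} (hf : Monotone f) (hfc : Continuous f)
    {a b c : ℝ} (hb : f b ≤ a) (hc : a < f c) : ∃ u, f u = a ∧ f ⁻¹' Iic a = Iic u := by
  set S := f ⁻¹' Iic a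
  have hSc : ∀ t ∈ S, t < c := fun t ht => hf.reflect_lt (lt_of_le_of_lt ht hc)
  have hbdd : BddAbove S := ⟨c, fun t ht => (hSc t ht).le⟩
  have huS : sSup S ∈ S := (isClosed_Iic.preimage hfc).csSup_mem ⟨b, hb⟩ hbdd
  refine ⟨sSup S, le_antisymm huS ?_,
    Subset.antisymm (fun t ht => le_csSup hbdd ht) fun t ht => (hf ht).trans huS⟩
  obtain ⟨v, hv, hfv⟩ := intermediate_value_Icc (hSc _ huS).le hfc.continuousOn ⟨huS, hc.le⟩
  have hvS : v = sSup S := le_antisymm (le_csSup hbdd (show f v ≤ a from hfv.le)) hv.1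
  rw [← hvS, hfv]

instance : IsProbabilityMeasure μ01 := ⟨by simp [μ01]⟩

lemma mu01_eq_restrict_Ioc : μ01 = volume.restrict (Ioc 0 1) :=
  Measure.restrict_congr_set Ioc_ae_eq_Icc.symm

lemma mu01_Iic (a : ℝ) : μ01 (Iic a) = ENNReal.ofReal (min a 1) := by
  have h : Iic a ∩ Icc 0 1 = Icc 0 (min a 1) := by
    ext
    simp only [mem_inter_iff, mem_Iic, mem_Icc, le_min_iff]
    tauto
  rw [μ01, Measure.restrict_apply measurableSet_Iic, h, Real.volume_Icc, sub_zero]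

section L2dist

variable {F : Type*} [NormedAddCommGroup F]

lemma L2dist_eq_norm_toLp_sub {f g : ℝ → F} (hf : MemLp f 2 μ01) (hg : MemLp g 2 μ01) :
    L2dist f g = ‖hf.toLp f - hg.toLp g‖ := by
  rw [← MemLp.toLp_sub, MemLp.norm_toLp_eq_sqrt]
  rfl

lemma L2dist_congr_ae {f f' g g' : ℝ → F} (hf : f =ᵐ[μ01] f') (hg : g =ᵐ[μ01] g') :
    L2dist f g = L2dist f' g' := by
  unfold L2dist
  congr 1
  refine integral_congr_ae ?_
  filter_upwards [hf, hg] with t hft hgt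
  rw [hft, hgt]

end L2dist

namespace GammaTilde

variable (γ : GammaTilde)

/-- `deriv'` is only pinned down a.e. on `I`; `dens` is a measurable, everywhere nonnegative
representative vanishing off `(0,1]`, and `prim` is its primitive, which agrees with `γ` on `I`
and is constant off `I`. -/
def dens : ℝ → ℝ :=
  (Ioc 0 1).indicator fun t => max (γ.integrableOn.aestronglyMeasurable.mk γ.deriv' t) 0

def prim (t : ℝ) : ℝ := ∫ u in (0:ℝ)..t, γ.dens u

lemma measurable_dens : Measurable γ.dens :=
  (γ.integrableOn.aestronglyMeasurable.stronglyMeasurable_mk.measurable.max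
    measurable_const).indicator measurableSet_Ioc

lemma dens_nonneg (t : ℝ) : 0 ≤ γ.dens t :=
  indicator_nonneg (fun _ _ => le_max_right _ _) t

lemma dens_eq_zero_of_notMem {t : ℝ} (ht : t ∉ Ioc 0 1) : γ.dens t = 0 :=
  indicator_of_notMem ht _

lemma dens_ae_eq : γ.dens =ᵐ[μ01] γ.deriv' := by
  have hIoc : ∀ᵐ t ∂μ01, t ∈ Ioc (0:ℝ) 1 := by
    rw [mu01_eq_restrict_Ioc]
    exact ae_restrict_mem measurableSet_Ioc
  filter_upwards [hIoc, γ.integrableOn.aestronglyMeasurable.ae_eq_mk, γ.nonneg]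
    with t ht hmk hnonneg
  rw [dens, indicator_of_mem ht, ← hmk, max_eq_left hnonneg]

lemma integrable_dens : Integrable γ.dens := by
  refine (integrable_indicator_iff measurableSet_Ioc).2 ?_
  refine (IntegrableOn.mono_set ?_ Ioc_subset_Icc_self).pos_part
  exact γ.integrableOn.congr_fun_ae γ.integrableOn.aestronglyMeasurable.ae_eq_mk

lemma integrable_dens_mu01 : Integrable γ.dens μ01 := γ.integrable_dens.restrict

lemma continuous_prim : Continuous γ.prim :=
  intervalIntegral.continuous_primitive (fun _ _ => γ.integrable_dens.intervalIntegrable) 0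

lemma monotone_prim : Monotone γ.prim := fun s t hst => by
  rw [← sub_nonneg, prim, prim, intervalIntegral.integral_interval_sub_left
    γ.integrable_dens.intervalIntegrable γ.integrable_dens.intervalIntegrable]
  exact intervalIntegral.integral_nonneg hst fun u _ => γ.dens_nonneg u

lemma prim_eq_toFun {t : ℝ} (ht : t ∈ Icc (0:ℝ) 1) : γ.prim t = γ.toFun t := by
  rw [γ.eq_integral t ht, prim]
  refine intervalIntegral.integral_congr_ae ?_
  filter_upwards [(ae_restrict_iff' measurableSet_Icc).1 γ.dens_ae_eq] with u hu hmem
  rw [uIoc_of_le ht.1] at hmem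
  exact hu ⟨hmem.1.le, hmem.2.trans ht.2⟩

lemma prim_one : γ.prim 1 = 1 := by
  rw [γ.prim_eq_toFun (right_mem_Icc.2 zero_le_one), γ.map_one]

lemma prim_zero : γ.prim 0 = 0 := intervalIntegral.integral_same

lemma integral_dens : ∫ t, γ.dens t ∂μ01 = 1 := by
  rw [mu01_eq_restrict_Ioc, ← intervalIntegral.integral_of_le zero_le_one]
  exact γ.prim_one

lemma setIntegral_Iic_dens (u : ℝ) : ∫ t in Iic u, γ.dens t = γ.prim u := by
  have hIic0 : ∫ t in Iic 0, γ.dens t = 0 := by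
    refine setIntegral_eq_zero_of_forall_eq_zero fun t ht => γ.dens_eq_zero_of_notMem ?_
    exact fun hmem => (not_lt.2 ht) hmem.1
  rw [prim, ← intervalIntegral.integral_Iic_sub_Iic γ.integrable_dens.integrableOn
    γ.integrable_dens.integrableOn, hIic0, sub_zero]

lemma integral_dens_volume : ∫ t, γ.dens t = 1 := by
  rw [← γ.integral_dens, μ01, setIntegral_eq_integral_of_forall_compl_eq_zero fun t ht =>
    γ.dens_eq_zero_of_notMem fun hmem => ht (Ioc_subset_Icc_self hmem)]

lemma prim_mem_Icc (t : ℝ) : γ.prim t ∈ Icc (0:ℝ) 1 := by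
  rw [← γ.setIntegral_Iic_dens]
  refine ⟨setIntegral_nonneg measurableSet_Iic fun u _ => γ.dens_nonneg u, ?_⟩
  rw [← γ.integral_dens_volume]
  exact setIntegral_le_integral γ.integrable_dens (ae_of_all _ γ.dens_nonneg)

def densMeasure : Measure ℝ := volume.withDensity fun t => ENNReal.ofReal (γ.dens t)

lemma densMeasure_Iic (u : ℝ) : γ.densMeasure (Iic u) = ENNReal.ofReal (γ.prim u) := by
  rw [densMeasure, withDensity_apply _ measurableSet_Iic, ← ofReal_integral_eq_lintegral_ofReal
    γ.integrable_dens.integrableOn (ae_of_all _ γ.dens_nonneg), setIntegral_Iic_dens]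

lemma densMeasure_univ : γ.densMeasure univ = 1 := by
  rw [densMeasure, withDensity_apply _ MeasurableSet.univ, Measure.restrict_univ,
    ← ofReal_integral_eq_lintegral_ofReal γ.integrable_dens (ae_of_all _ γ.dens_nonneg),
    integral_dens_volume, ENNReal.ofReal_one]

lemma map_prim_densMeasure : γ.densMeasure.map γ.prim = μ01 := by
  have : IsFiniteMeasure γ.densMeasure := ⟨by simp [densMeasure_univ]⟩
  refine Measure.ext_of_Iic _ _ fun a => ?_
  rw [Measure.map_apply γ.continuous_prim.measurable measurableSet_Iic, mu01_Iic]
  rcases lt_or_ge a 0 with ha0 | ha0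
  · rw [show γ.prim ⁻¹' Iic a = ∅ from eq_empty_of_forall_notMem fun t ht =>
        (not_le.2 ha0) ((γ.prim_mem_Icc t).1.trans ht), measure_empty,
      ENNReal.ofReal_of_nonpos (min_le_of_left_le ha0.le)]
  rcases lt_or_ge a 1 with ha1 | ha1
  · obtain ⟨u, hu, hpre⟩ := γ.monotone_prim.exists_preimage_Iic_eq_Iic γ.continuous_prim
      (γ.prim_zero.trans_le ha0) (ha1.trans_eq γ.prim_one.symm)
    rw [hpre, densMeasure_Iic, hu, min_eq_left ha1.le]
  · rw [show γ.prim ⁻¹' Iic a = univ from eq_univ_of_forall fun t =>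
        (γ.prim_mem_Icc t).2.trans ha1, densMeasure_univ, min_eq_right ha1, ENNReal.ofReal_one]

lemma ae_comp_prim {P : ℝ → Prop} (h : ∀ᵐ s ∂μ01, P s) :
    ∀ᵐ t ∂μ01, γ.dens t ≠ 0 → P (γ.prim t) := by
  rw [← γ.map_prim_densMeasure] at h
  have h' := ae_of_ae_map γ.continuous_prim.aemeasurable h
  rw [densMeasure, ae_withDensity_iff γ.measurable_dens.ennreal_ofReal] at h'
  filter_upwards [ae_restrict_of_ae h'] with t ht hdt
  exact ht (ENNReal.ofReal_pos.2 ((γ.dens_nonneg t).lt_of_ne' hdt)).ne'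

section comp

variable {G : Type*} [NormedAddCommGroup G] [NormedSpace ℝ G]

lemma integral_comp_prim {h : ℝ → G} (hh : AEStronglyMeasurable h μ01) :
    ∫ t, γ.dens t • h (γ.prim t) ∂μ01 = ∫ s, h s ∂μ01 := by
  conv_rhs => rw [← γ.map_prim_densMeasure]
  rw [integral_map γ.continuous_prim.aemeasurable (γ.map_prim_densMeasure ▸ hh), densMeasure,
    integral_withDensity_eq_integral_toReal_smul γ.measurable_dens.ennreal_ofReal
      (ae_of_all _ fun _ => ENNReal.ofReal_lt_top)]
  simp_rw [ENNReal.toReal_ofReal (γ.dens_nonneg _)]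
  exact setIntegral_eq_integral_of_forall_compl_eq_zero fun t ht => by
    rw [γ.dens_eq_zero_of_notMem fun hmem => ht (Ioc_subset_Icc_self hmem), zero_smul]

lemma integrable_comp_prim {h : ℝ → G} (hh : Integrable h μ01) :
    Integrable (fun t => γ.dens t • h (γ.prim t)) μ01 := by
  rw [← γ.map_prim_densMeasure] at hh
  have h' := (integrable_map_measure hh.1 γ.continuous_prim.aemeasurable).1 hh
  rw [densMeasure, integrable_withDensity_iff_integrable_smul' γ.measurable_dens.ennreal_ofReal
    (ae_of_all _ fun _ => ENNReal.ofReal_lt_top)] at h'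
  simp_rw [ENNReal.toReal_ofReal (γ.dens_nonneg _)] at h'
  exact h'.restrict

end comp

def ofDensity (f : ℝ → ℝ) (hf : IntegrableOn f (Icc 0 1)) (hf0 : ∀ᵐ t ∂μ01, 0 ≤ f t)
    (hf1 : ∫ t, f t ∂μ01 = 1) : GammaTilde where
  toFun t := ∫ u in (0:ℝ)..t, f u
  deriv' := f
  integrableOn := hf
  nonneg := hf0
  map_zero := intervalIntegral.integral_same
  map_one := by rwa [intervalIntegral.integral_of_le zero_le_one, ← mu01_eq_restrict_Ioc]
  eq_integral _ _ := rfl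

variable (β : GammaTilde)

lemma memLp_sqrt_dens : MemLp (fun t => √(γ.dens t)) 2 μ01 := by
  refine (memLp_two_iff_integrable_sq
    (Real.continuous_sqrt.measurable.comp γ.measurable_dens).aestronglyMeasurable).2 ?_
  simpa only [Function.comp_apply, Real.sq_sqrt (γ.dens_nonneg _)] using γ.integrable_dens_mu01

def overlap : ℝ := ∫ t, √(γ.dens t) * √(β.dens t) ∂μ01

lemma integrable_sqrt_dens_mul : Integrable (fun t => √(γ.dens t) * √(β.dens t)) μ01 :=
  γ.memLp_sqrt_dens.integrable_mul β.memLp_sqrt_dens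

lemma overlap_le_one : overlap γ β ≤ 1 := by
  calc overlap γ β ≤ ∫ t, (γ.dens t + β.dens t) / 2 ∂μ01 := by
        refine integral_mono (integrable_sqrt_dens_mul γ β)
          ((γ.integrable_dens_mu01.add β.integrable_dens_mu01).div_const 2) fun t => ?_
        have h := two_mul_le_add_sq √(γ.dens t) √(β.dens t)
        rw [Real.sq_sqrt (γ.dens_nonneg t), Real.sq_sqrt (β.dens_nonneg t)] at h
        dsimp only
        linarith
    _ = 1 := by
        rw [integral_div, integral_add γ.integrable_dens_mu01 β.integrable_dens_mu01,
          integral_dens, integral_dens]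
        norm_num

lemma overlap_self : overlap γ γ = 1 := by
  simp_rw [overlap, Real.mul_self_sqrt (γ.dens_nonneg _), integral_dens]

lemma abs_prim_sub_prim_le {t : ℝ} (ht : t ∈ Icc (0:ℝ) 1) :
    |γ.prim t - β.prim t| ≤ ∫ s, |γ.dens s - β.dens s| ∂μ01 := by
  rw [prim, prim, ← intervalIntegral.integral_sub γ.integrable_dens.intervalIntegrable
    β.integrable_dens.intervalIntegrable]
  refine (intervalIntegral.abs_integral_le_integral_abs ht.1).trans ?_
  rw [intervalIntegral.integral_of_le ht.1, mu01_eq_restrict_Ioc]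
  exact setIntegral_mono_set (γ.integrable_dens.sub β.integrable_dens).abs.integrableOn
    (ae_of_all _ fun _ => abs_nonneg _) (Ioc_subset_Ioc_right ht.2).eventuallyLE

section perturb

variable {c : ℝ} (hc : 0 < c)

def perturb : GammaTilde :=
  ofDensity (fun t => (γ.dens t + c) / (1 + c))
    ((γ.integrable_dens_mu01.add (integrable_const c)).div_const _)
    (ae_of_all _ fun t => by have := γ.dens_nonneg t; positivity)
    (by
      rw [integral_div, integral_add γ.integrable_dens_mu01 (integrable_const c), integral_dens]
      simp only [integral_const, probReal_univ, one_smul]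
      exact div_self (by positivity))

lemma isInGamma_perturb : (γ.perturb hc).IsInGamma :=
  ae_of_all _ fun t => by
    have := γ.dens_nonneg t
    exact div_pos (by positivity) (by positivity)

lemma abs_prim_perturb_sub_le {t : ℝ} (ht : t ∈ Icc (0:ℝ) 1) :
    |(γ.perturb hc).prim t - γ.prim t| ≤ c := by
  have hprim : (γ.perturb hc).prim t = (γ.prim t + c * t) / (1 + c) := by
    rw [prim_eq_toFun _ ht]
    simp only [perturb, ofDensity]
    rw [intervalIntegral.integral_div, intervalIntegral.integral_add
      γ.integrable_dens.intervalIntegrable intervalIntegrable_const,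
      intervalIntegral.integral_const, smul_eq_mul, sub_zero, prim, mul_comm t]
  have hdiff : (γ.perturb hc).prim t - γ.prim t = c / (1 + c) * (t - γ.prim t) := by
    rw [hprim]
    field_simp
    ring
  have hbound : |t - γ.prim t| ≤ 1 := abs_sub_le_of_nonneg_of_le ht.1 ht.2
    (γ.prim_mem_Icc t).1 (γ.prim_mem_Icc t).2
  rw [hdiff, abs_mul, abs_of_pos (by positivity)]
  calc c / (1 + c) * |t - γ.prim t| ≤ c / (1 + c) * 1 := by gcongr
    _ ≤ c := by rw [mul_one]; exact div_le_self hc.le (by linarith)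

lemma one_sub_le_overlap_perturb : 1 - c ≤ overlap (γ.perturb hc) γ := by
  have hpt : ∀ᵐ t ∂μ01, γ.dens t / (1 + c) ≤ √((γ.perturb hc).dens t) * √(γ.dens t) := by
    filter_upwards [(γ.perturb hc).dens_ae_eq] with t ht
    have hd := γ.dens_nonneg t
    have hsqrt : √(γ.dens t) / (1 + c) ≤ √((γ.perturb hc).dens t) := by
      rw [ht]
      simp only [perturb, ofDensity]
      rw [Real.le_sqrt (by positivity) (by positivity), div_pow, Real.sq_sqrt hd,
        div_le_div_iff₀ (by positivity) (by positivity)]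
      have : 0 ≤ (1 + c) * (γ.dens t * c + c + c ^ 2) := by positivity
      nlinarith
    calc γ.dens t / (1 + c) = √(γ.dens t) / (1 + c) * √(γ.dens t) := by
          rw [div_mul_eq_mul_div, Real.mul_self_sqrt hd]
      _ ≤ _ := by gcongr
  calc 1 - c ≤ 1 / (1 + c) := by
        rw [le_div_iff₀ (by positivity)]
        nlinarith
    _ = ∫ t, γ.dens t / (1 + c) ∂μ01 := by rw [integral_div, integral_dens]
    _ ≤ overlap (γ.perturb hc) γ :=
        integral_mono_ae (γ.integrable_dens_mu01.div_const _)
          (integrable_sqrt_dens_mul _ _) hpt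

end perturb

section mismatch

variable {F : Type*} [NormedAddCommGroup F] {Q : ℝ → F} {e : ℝ → F}

def mismatch (Q : ℝ → F) : ℝ :=
  ∫ t, √(γ.dens t) * √(β.dens t) * ‖Q (γ.prim t) - Q (β.prim t)‖ ^ 2 ∂μ01

lemma integrable_mismatch_integrand (hQm : StronglyMeasurable Q) (hQ1 : ∀ s, ‖Q s‖ = 1) :
    Integrable (fun t => √(γ.dens t) * √(β.dens t) * ‖Q (γ.prim t) - Q (β.prim t)‖ ^ 2) μ01 := by
  refine (integrable_sqrt_dens_mul γ β).mul_bdd (c := 4) ?_ (ae_of_all _ fun t => ?_)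
  · exact (((hQm.comp_measurable γ.continuous_prim.measurable).sub
      (hQm.comp_measurable β.continuous_prim.measurable)).norm.pow 2).aestronglyMeasurable
  · have h := norm_sub_le (Q (γ.prim t)) (Q (β.prim t))
    rw [hQ1, hQ1] at h
    rw [norm_pow, norm_norm]
    nlinarith [norm_nonneg (Q (γ.prim t) - Q (β.prim t))]

lemma memLp_sqrt_dens_mul_norm_comp (hem : StronglyMeasurable e) (he : MemLp e 2 μ01) :
    MemLp (fun t => √(γ.dens t) * ‖e (γ.prim t)‖) 2 μ01 := by
  refine (memLp_two_iff_integrable_sq ((Real.continuous_sqrt.measurable.comp γ.measurable_dens).mul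
    (hem.norm.measurable.comp γ.continuous_prim.measurable)).aestronglyMeasurable).2 ?_
  simpa only [Pi.mul_apply, Function.comp_apply, mul_pow, Real.sq_sqrt (γ.dens_nonneg _),
    smul_eq_mul] using γ.integrable_comp_prim ((memLp_two_iff_integrable_sq_norm he.1).1 he)

lemma integrable_sqrt_dens_mul_norm_comp_mul (hem : StronglyMeasurable e) (he : MemLp e 2 μ01) :
    Integrable (fun t => √(γ.dens t) * ‖e (γ.prim t)‖ * √(β.dens t)) μ01 :=
  (γ.memLp_sqrt_dens_mul_norm_comp hem he).integrable_mul β.memLp_sqrt_dens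

/-- By Cauchy–Schwarz and the change of variables `s = γ(t)`. -/
lemma integral_sqrt_dens_mul_norm_comp_le (hem : StronglyMeasurable e) (he : MemLp e 2 μ01) :
    ∫ t, √(γ.dens t) * ‖e (γ.prim t)‖ * √(β.dens t) ∂μ01 ≤ √(∫ s, ‖e s‖ ^ 2 ∂μ01) := by
  have h := integral_mul_le_sqrt_mul_sqrt (γ.memLp_sqrt_dens_mul_norm_comp hem he)
    β.memLp_sqrt_dens
  simp_rw [mul_pow, Real.sq_sqrt (β.dens_nonneg _), integral_dens, Real.sqrt_one, mul_one,
    Real.sq_sqrt (γ.dens_nonneg _)] at h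
  have hcov := γ.integral_comp_prim (hem.norm.pow 2).aestronglyMeasurable
  simp only [Pi.pow_apply, smul_eq_mul] at hcov
  rwa [hcov] at h

/-- Approximate `Q` in `L²` by a continuous `u`: the `u`-part of the mismatch is controlled by the
uniform continuity of `u`, the `Q - u` part by `integral_sqrt_dens_mul_norm_comp_le`. -/
lemma exists_mismatch_le [NormedSpace ℝ F] (hQm : StronglyMeasurable Q)
    (hQ1 : ∀ s, ‖Q s‖ = 1) (β : GammaTilde) {ε : ℝ} (hε : 0 < ε) :
    ∃ ω > 0, ∀ γ : GammaTilde, (∀ t ∈ Icc (0:ℝ) 1, |γ.prim t - β.prim t| ≤ ω) →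
      mismatch γ β Q ≤ ε := by
  have hη : 0 < ε / 6 := by positivity
  have hQ : MemLp Q 2 μ01 :=
    MemLp.of_bound hQm.aestronglyMeasurable 1 (ae_of_all _ fun s => (hQ1 s).le)
  obtain ⟨u, hQu, hu⟩ := hQ.exists_boundedContinuous_eLpNorm_sub_le ENNReal.ofNat_ne_top
    (ENNReal.ofReal_pos.2 hη).ne'
  set e : ℝ → F := Q - u with he_def
  have he : MemLp e 2 μ01 := hQ.sub hu
  have hem : StronglyMeasurable e := hQm.sub u.continuous.stronglyMeasurable
  have heη : √(∫ s, ‖e s‖ ^ 2 ∂μ01) ≤ ε / 6 := by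
    rw [← he.norm_toLp_eq_sqrt, Lp.norm_toLp]
    exact ENNReal.toReal_le_of_le_ofReal hη.le hQu
  obtain ⟨ω, hω, hu_mod⟩ := Metric.uniformContinuousOn_iff_le.1
    (isCompact_Icc.uniformContinuousOn_of_continuous u.continuous.continuousOn) (ε / 6) hη
  refine ⟨ω, hω, fun γ hclose => ?_⟩
  have hpt : ∀ᵐ t ∂μ01, √(γ.dens t) * √(β.dens t) * ‖Q (γ.prim t) - Q (β.prim t)‖ ^ 2 ≤
      2 * (ε / 6 * (√(γ.dens t) * √(β.dens t)) + √(γ.dens t) * ‖e (γ.prim t)‖ * √(β.dens t) +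
        √(β.dens t) * ‖e (β.prim t)‖ * √(γ.dens t)) := by
    filter_upwards [ae_restrict_mem measurableSet_Icc] with t ht
    have hu_t : ‖u (γ.prim t) - u (β.prim t)‖ ≤ ε / 6 := by
      rw [← dist_eq_norm]
      exact hu_mod _ (γ.prim_mem_Icc t) _ (β.prim_mem_Icc t)
        ((Real.dist_eq _ _).trans_le (hclose t ht))
    have hQ_t := norm_sub_sq_le_of_norm_eq_one (hQ1 (γ.prim t)) (hQ1 (β.prim t))
      (u (γ.prim t)) (u (β.prim t))
    calc _ ≤ √(γ.dens t) * √(β.dens t) * (2 * (ε / 6 + ‖e (γ.prim t)‖ + ‖e (β.prim t)‖)) := by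
          gcongr
          simp only [he_def, Pi.sub_apply]
          linarith
      _ = _ := by ring
  have hi₀ := (integrable_sqrt_dens_mul γ β).const_mul (ε / 6)
  have hi₁ := γ.integrable_sqrt_dens_mul_norm_comp_mul β hem he
  have hi₂ := β.integrable_sqrt_dens_mul_norm_comp_mul γ hem he
  calc mismatch γ β Q
      ≤ ∫ t, 2 * (ε / 6 * (√(γ.dens t) * √(β.dens t)) +
          √(γ.dens t) * ‖e (γ.prim t)‖ * √(β.dens t) +
          √(β.dens t) * ‖e (β.prim t)‖ * √(γ.dens t)) ∂μ01 :=
        integral_mono_ae (integrable_mismatch_integrand γ β hQm hQ1)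
          (((hi₀.add hi₁).add hi₂).const_mul 2) hpt
    _ = 2 * (ε / 6 * overlap γ β + ∫ t, √(γ.dens t) * ‖e (γ.prim t)‖ * √(β.dens t) ∂μ01 +
          ∫ t, √(β.dens t) * ‖e (β.prim t)‖ * √(γ.dens t) ∂μ01) := by
        rw [integral_const_mul, integral_add (by exact hi₀.add hi₁) hi₂, integral_add hi₀ hi₁,
          integral_const_mul]
        rfl
    _ ≤ 2 * (ε / 6 * 1 + ε / 6 + ε / 6) := by
        gcongr
        · exact overlap_le_one γ β
        · exact (integral_sqrt_dens_mul_norm_comp_le γ β hem he).trans heη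
        · exact (integral_sqrt_dens_mul_norm_comp_le β γ hem he).trans heη
    _ = ε := by ring

end mismatch

end GammaTilde

open GammaTilde

variable {Q : ℝ → E}

def regAct (Q : ℝ → E) (γ : GammaTilde) (t : ℝ) : E := √(γ.dens t) • Q (γ.prim t)

lemma norm_regAct (hQ1 : ∀ s, ‖Q s‖ = 1) (γ : GammaTilde) (t : ℝ) :
    ‖regAct Q γ t‖ = √(γ.dens t) := by
  rw [regAct, norm_smul, Real.norm_of_nonneg (Real.sqrt_nonneg _), hQ1, mul_one]

lemma memLp_regAct (hQm : StronglyMeasurable Q) (hQ1 : ∀ s, ‖Q s‖ = 1) (γ : GammaTilde) :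
    MemLp (regAct Q γ) 2 μ01 := by
  refine γ.memLp_sqrt_dens.of_le_mul (c := 1) ?_ (ae_of_all _ fun t => ?_)
  · exact ((Real.continuous_sqrt.measurable.comp γ.measurable_dens).stronglyMeasurable.smul
      (hQm.comp_measurable γ.continuous_prim.measurable)).aestronglyMeasurable
  · rw [norm_regAct hQ1, one_mul, Real.norm_of_nonneg (Real.sqrt_nonneg _)]

lemma act_ae_eq_regAct {q : ℝ → E} (hq : q =ᵐ[μ01] Q) (γ : GammaTilde) :
    act q γ =ᵐ[μ01] regAct Q γ := by
  filter_upwards [γ.ae_comp_prim hq, γ.dens_ae_eq, ae_restrict_mem measurableSet_Icc]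
    with t hqQ hdens ht
  rw [act, regAct, ← hdens, ← γ.prim_eq_toFun ht]
  rcases eq_or_ne (γ.dens t) 0 with h0 | h0
  · simp [h0]
  · rw [hqQ h0]

section actLp

variable (hQm : StronglyMeasurable Q) (hQ1 : ∀ s, ‖Q s‖ = 1)

def actLp (γ : GammaTilde) : Lp E 2 μ01 := (memLp_regAct hQm hQ1 γ).toLp _

lemma coeFn_actLp (γ : GammaTilde) : actLp hQm hQ1 γ =ᵐ[μ01] regAct Q γ :=
  MemLp.coeFn_toLp _

lemma L2dist_regAct (γ : GammaTilde) {g : ℝ → E} (hg : MemLp g 2 μ01) :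
    L2dist (regAct Q γ) g = ‖actLp hQm hQ1 γ - hg.toLp g‖ :=
  L2dist_eq_norm_toLp_sub _ hg

lemma inner_actLp (γ β : GammaTilde) :
    inner ℝ (actLp hQm hQ1 γ) (actLp hQm hQ1 β) = overlap γ β - mismatch γ β Q / 2 := by
  have hpt : ∀ t, inner ℝ (regAct Q γ t) (regAct Q β t) = √(γ.dens t) * √(β.dens t) -
      √(γ.dens t) * √(β.dens t) * ‖Q (γ.prim t) - Q (β.prim t)‖ ^ 2 / 2 := fun t => by
    rw [regAct, regAct, real_inner_smul_left, real_inner_smul_right, ← mul_assoc]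
    have h := norm_sub_sq_real (Q (γ.prim t)) (Q (β.prim t))
    rw [hQ1, hQ1] at h
    linear_combination (√(γ.dens t) * √(β.dens t) / 2) * h
  rw [actLp, actLp, MemLp.inner_toLp, integral_congr_ae (ae_of_all _ hpt),
    integral_sub (integrable_sqrt_dens_mul γ β)
      ((integrable_mismatch_integrand γ β hQm hQ1).div_const 2), integral_div]
  rfl

lemma norm_actLp (γ : GammaTilde) : ‖actLp hQm hQ1 γ‖ = 1 := by
  have h := inner_actLp hQm hQ1 γ γ
  simp_rw [mismatch, sub_self, norm_zero, overlap_self] at h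
  rw [norm_eq_sqrt_real_inner, h]
  norm_num

lemma norm_actLp_sub_sq (γ β : GammaTilde) :
    ‖actLp hQm hQ1 γ - actLp hQm hQ1 β‖ ^ 2 = 2 * (1 - overlap γ β) + mismatch γ β Q := by
  rw [norm_sub_sq_real, norm_actLp, norm_actLp, inner_actLp]
  ring

lemma exists_isInGamma_norm_actLp_sub_lt (γ : GammaTilde) {ε : ℝ} (hε : 0 < ε) :
    ∃ δ : GammaTilde, δ.IsInGamma ∧ ‖actLp hQm hQ1 δ - actLp hQm hQ1 γ‖ < ε := by
  obtain ⟨ω, hω, hmismatch⟩ := exists_mismatch_le hQm hQ1 γ (ε := ε ^ 2 / 2) (by positivity)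
  have hc : 0 < min ω (ε ^ 2 / 8) := lt_min hω (by positivity)
  refine ⟨γ.perturb hc, γ.isInGamma_perturb hc, ?_⟩
  have hm := hmismatch _ fun t ht => (γ.abs_prim_perturb_sub_le hc ht).trans (min_le_left _ _)
  have ho := γ.one_sub_le_overlap_perturb hc
  have hsq : ‖actLp hQm hQ1 (γ.perturb hc) - actLp hQm hQ1 γ‖ ^ 2 < ε ^ 2 := by
    rw [norm_actLp_sub_sq]
    nlinarith [min_le_right ω (ε ^ 2 / 8)]
  exact lt_of_pow_lt_pow_left₀ 2 hε.le hsq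

lemma inner_actLp_le_overlap {Φ : GammaTilde} {P : Lp E 2 μ01}
    (hΦ : Φ.dens =ᵐ[μ01] fun t => ‖P t‖ ^ 2) (γ : GammaTilde) :
    inner ℝ (actLp hQm hQ1 γ) P ≤ overlap γ Φ := by
  rw [L2.inner_def]
  refine integral_mono_ae (L2.integrable_inner _ _) (integrable_sqrt_dens_mul γ Φ) ?_
  filter_upwards [coeFn_actLp hQm hQ1 γ, hΦ] with t hγt hΦt
  rw [hγt, hΦt, Real.sqrt_sq (norm_nonneg _), ← norm_regAct hQ1 γ t]
  exact real_inner_le_norm _ _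

lemma abs_prim_sub_prim_le_two_mul {Φ : GammaTilde} {P : Lp E 2 μ01}
    (hΦ : Φ.dens =ᵐ[μ01] fun t => ‖P t‖ ^ 2) (hP : ‖P‖ = 1) (γ : GammaTilde) {t : ℝ}
    (ht : t ∈ Icc (0:ℝ) 1) : |γ.prim t - Φ.prim t| ≤ 2 * ‖actLp hQm hQ1 γ - P‖ := by
  have hdens : (fun s => |γ.dens s - Φ.dens s|) =ᵐ[μ01]
      fun s => |‖actLp hQm hQ1 γ s‖ ^ 2 - ‖P s‖ ^ 2| := by
    filter_upwards [coeFn_actLp hQm hQ1 γ, hΦ] with s hγs hΦs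
    rw [hγs, hΦs, norm_regAct hQ1, Real.sq_sqrt (γ.dens_nonneg s)]
  calc |γ.prim t - Φ.prim t| ≤ ∫ s, |γ.dens s - Φ.dens s| ∂μ01 := γ.abs_prim_sub_prim_le Φ ht
    _ ≤ ‖actLp hQm hQ1 γ - P‖ * (‖actLp hQm hQ1 γ‖ + ‖P‖) := by
        rw [integral_congr_ae hdens]
        exact integral_abs_norm_sq_sub_norm_sq_le _ _
    _ = 2 * ‖actLp hQm hQ1 γ - P‖ := by rw [norm_actLp, hP]; ring

lemma exists_eq_actLp_of_mem_closure {P : Lp E 2 μ01} (hP : P ∈ closure (range (actLp hQm hQ1))) :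
    ∃ Φ : GammaTilde, P = actLp hQm hQ1 Φ := by
  have hP1 : ‖P‖ = 1 := by
    simpa using closure_minimal (t := Metric.sphere 0 1)
      (by rintro _ ⟨γ, rfl⟩; simp [norm_actLp]) Metric.isClosed_sphere hP
  have hPint : Integrable (fun t => ‖P t‖ ^ 2) μ01 :=
    (memLp_two_iff_integrable_sq_norm (Lp.aestronglyMeasurable P)).1 (Lp.memLp P)
  have hPint1 : ∫ t, ‖P t‖ ^ 2 ∂μ01 = 1 := by
    rw [← Real.sqrt_eq_one, ← Lp.norm_eq_sqrt_integral, hP1]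
  set Φ := ofDensity _ hPint (ae_of_all _ fun _ => sq_nonneg _) hPint1
  have hΦ : Φ.dens =ᵐ[μ01] fun t => ‖P t‖ ^ 2 := Φ.dens_ae_eq
  refine ⟨Φ, (inner_eq_one_iff_of_norm_eq_one (𝕜 := ℝ) hP1 (norm_actLp hQm hQ1 Φ)).1
    (le_antisymm ?_ ?_)⟩
  · simpa only [hP1, norm_actLp, one_mul] using real_inner_le_norm P (actLp hQm hQ1 Φ)
  refine le_of_forall_sub_le fun ε hε => ?_
  obtain ⟨ω, hω, hmismatch⟩ := exists_mismatch_le hQm hQ1 Φ hε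
  obtain ⟨_, ⟨γ, rfl⟩, hγ⟩ := Metric.mem_closure_iff.1 hP (min (ω / 2) (ε / 4)) (by positivity)
  rw [dist_comm, dist_eq_norm] at hγ
  have hm : mismatch γ Φ Q ≤ ε := hmismatch γ fun t ht =>
    (abs_prim_sub_prim_le_two_mul hQm hQ1 hΦ hP1 γ ht).trans
      (by linarith [min_le_left (ω / 2) (ε / 4)])
  have hγP := abs_real_inner_le_norm (actLp hQm hQ1 γ - P) P
  have hγΦ := abs_real_inner_le_norm (actLp hQm hQ1 γ - P) (actLp hQm hQ1 Φ)
  rw [inner_sub_left, real_inner_self_eq_norm_sq, hP1] at hγP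
  rw [inner_sub_left, inner_actLp, norm_actLp] at hγΦ
  have ho := inner_actLp_le_overlap hQm hQ1 hΦ γ
  linarith [abs_le.1 hγP, abs_le.1 hγΦ, min_le_right (ω / 2) (ε / 4)]

end actLp

variable {q : ℝ → E}

lemma orbitClosure_subset_orbitTilde (hQm : StronglyMeasurable Q) (hQ1 : ∀ s, ‖Q s‖ = 1)
    (hq : q =ᵐ[μ01] Q) : orbitClosure q ⊆ orbitTilde q := by
  rintro p ⟨hp, happrox⟩
  have hmem : hp.toLp p ∈ closure (range (actLp hQm hQ1)) := by
    refine Metric.mem_closure_iff.2 fun ε hε => ?_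
    obtain ⟨r, ⟨γ, -, hr⟩, hrp⟩ := happrox ε hε
    refine ⟨actLp hQm hQ1 γ, mem_range_self γ, ?_⟩
    rwa [dist_comm, dist_eq_norm, ← L2dist_regAct,
      ← L2dist_congr_ae (hr.trans (act_ae_eq_regAct hq γ)) EventuallyEq.rfl]
  obtain ⟨Φ, hΦ⟩ := exists_eq_actLp_of_mem_closure hQm hQ1 hmem
  refine ⟨Φ, hp.coeFn_toLp.symm.trans ?_⟩
  rw [hΦ]
  exact (coeFn_actLp hQm hQ1 Φ).trans (act_ae_eq_regAct hq Φ).symm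

lemma orbitTilde_subset_orbitClosure (hQm : StronglyMeasurable Q) (hQ1 : ∀ s, ‖Q s‖ = 1)
    (hq : q =ᵐ[μ01] Q) : orbitTilde q ⊆ orbitClosure q := by
  rintro p ⟨γ, hp⟩
  have hpγ : p =ᵐ[μ01] regAct Q γ := hp.trans (act_ae_eq_regAct hq γ)
  refine ⟨(memLp_regAct hQm hQ1 γ).ae_eq hpγ.symm, fun ε hε => ?_⟩
  obtain ⟨δ, hδ, hdist⟩ := exists_isInGamma_norm_actLp_sub_lt hQm hQ1 γ hε
  refine ⟨act q δ, ⟨δ, hδ, EventuallyEq.rfl⟩, ?_⟩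
  rwa [L2dist_congr_ae (act_ae_eq_regAct hq δ) hpγ,
    L2dist_regAct hQm hQ1 δ (memLp_regAct hQm hQ1 γ)]

theorem orbitClosure_eq_orbitTilde (hq : AEStronglyMeasurable q μ01)
    (hunit : ∀ᵐ t ∂μ01, ‖q t‖ = 1) : orbitClosure q = orbitTilde q := by
  obtain ⟨Q, hQm, hQ1, hqQ⟩ := exists_stronglyMeasurable_norm_eq_one hq hunit
  exact (orbitClosure_subset_orbitTilde hQm hQ1 hqQ).antisymm
    (orbitTilde_subset_orbitClosure hQm hQ1 hqQ)

theorem closed_orbit_eq_semigroup_orbit_unit_speed_general (N : ℕ)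
    (q : ℝ → EuclideanSpace ℝ (Fin N)) (hq : MemLp q 2 μ01)
    (hunit : ∀ᵐ t ∂μ01, ‖q t‖ = 1) :
    orbitClosure q = orbitTilde q := by
  exact orbitClosure_eq_orbitTilde hq.1 hunit

/-- for `q ∈ L²(I,ℝᴺ)` with `|q(t)| = 1` a.e., the closure of the
`Γ`-orbit of `q` equals the `Γ̃`-orbit: `[q] = qΓ̃`. -/
theorem closed_orbit_eq_semigroup_orbit_unit_speed (N : ℕ) (hN : 1 ≤ N)
    (q : ℝ → EuclideanSpace ℝ (Fin N)) (hq : MemLp q 2 μ01)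
    (hunit : ∀ᵐ t ∂μ01, ‖q t‖ = 1) :
    orbitClosure q = orbitTilde q :=
  closed_orbit_eq_semigroup_orbit_unit_speed_general N q hq hunit

end
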